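/- For every real x > 0 and every integer j ≥ 1, one has (x+1)^j − (j/2)(x+1)^{j−1} ≤ x^{j−1}(x + j/2), and consequently (x/(x+1))^{j−1} ≥ 1 − (j−1)/(x + j/2). -/
import Mathlib

lemma pair_pow_le (a b : ℝ) (hb : 0 ≤ b) (hab : b ≤ a) (k l : ℕ) :
    a ^ k * b ^ l + a ^ l * b ^ k ≤ a ^ (k + l) + b ^ (k + l) := by
  have h1 : (0:ℝ) ≤ (a ^ k - b ^ k) * (a ^ l - b ^ l) :=
    mul_nonneg (sub_nonneg.2 (pow_le_pow_left₀ hb hab k))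
      (sub_nonneg.2 (pow_le_pow_left₀ hb hab l))
  have e1 := pow_add a k l
  have e2 := pow_add b k l
  nlinarith [e1, e2, h1]

lemma sum_pow_le (a b : ℝ) (hb : 0 ≤ b) (hab : b ≤ a) (n : ℕ) :
    2 * ∑ i ∈ Finset.range n, a ^ i * b ^ (n - 1 - i)
      ≤ n * (a ^ (n - 1) + b ^ (n - 1)) := by
  have hrefl := Finset.sum_range_reflect (fun i => a ^ i * b ^ (n - 1 - i)) n
  have key : 2 * ∑ i ∈ Finset.range n, a ^ i * b ^ (n - 1 - i)
      = ∑ i ∈ Finset.range n, (a ^ i * b ^ (n - 1 - i) + a ^ (n - 1 - i) * b ^ i) := by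
    rw [Finset.sum_add_distrib, two_mul]
    congr 1
    rw [← hrefl]
    apply Finset.sum_congr rfl
    intro i hi
    rw [Finset.mem_range] at hi
    congr 2
    omega
  rw [key]
  calc ∑ i ∈ Finset.range n, (a ^ i * b ^ (n - 1 - i) + a ^ (n - 1 - i) * b ^ i)
      ≤ ∑ _i ∈ Finset.range n, (a ^ (n - 1) + b ^ (n - 1)) := by
        apply Finset.sum_le_sum
        intro i hi
        rw [Finset.mem_range] at hi
        have hkl : i + (n - 1 - i) = n - 1 := by omega
        have := pair_pow_le a b hb hab i (n - 1 - i)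
        rwa [hkl] at this
    _ = n * (a ^ (n - 1) + b ^ (n - 1)) := by
        rw [Finset.sum_const, Finset.card_range, nsmul_eq_mul]

theorem pow_ratio_ineq (x : ℝ) (hx : 0 < x) (j : ℕ) (hj : 1 ≤ j) :
    (x + 1) ^ j - ((j : ℝ) / 2) * (x + 1) ^ (j - 1) ≤ x ^ (j - 1) * (x + (j : ℝ) / 2) ∧
    (x / (x + 1)) ^ (j - 1) ≥ 1 - ((j : ℝ) - 1) / (x + (j : ℝ) / 2) := by
  obtain ⟨m, rfl⟩ : ∃ m, j = m + 1 := ⟨j - 1, by omega⟩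
  simp only [Nat.add_sub_cancel]
  push_cast
  have hx1 : (0:ℝ) < x + 1 := by linarith
  have hxle : x ≤ x + 1 := by linarith
  -- geometric sum identity
  have hgeom := geom_sum₂_mul (x + 1) x (m + 1)
  have hsum := sum_pow_le (x + 1) x hx.le hxle (m + 1)
  simp only [Nat.add_sub_cancel] at hsum
  have hdiff : (x + 1) ^ (m + 1) - x ^ (m + 1)
      = ∑ i ∈ Finset.range (m + 1), (x + 1) ^ i * x ^ (m - i) := by
    simp only [Nat.add_sub_cancel] at hgeom
    rw [← hgeom]; ring
  have hm : (0:ℝ) ≤ (m:ℝ) := Nat.cast_nonneg m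
  have key : (x + 1) ^ (m + 1) - x ^ (m + 1)
      ≤ (((m:ℝ) + 1) / 2) * ((x + 1) ^ m + x ^ m) := by
    rw [hdiff]
    push_cast at hsum
    linarith
  have hps1 : (x + 1) ^ (m + 1) = (x + 1) ^ m * (x + 1) := pow_succ _ _
  have hps2 : x ^ (m + 1) = x ^ m * x := pow_succ _ _
  have part1 : (x + 1) ^ (m + 1) - (((m:ℝ) + 1) / 2) * (x + 1) ^ m
      ≤ x ^ m * (x + ((m:ℝ) + 1) / 2) := by nlinarith [key]
  refine ⟨part1, ?_⟩
  have hS : (0:ℝ) < x + ((m:ℝ) + 1) / 2 := by positivity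
  rw [ge_iff_le, div_pow]
  have heq : 1 - ((m:ℝ) + 1 - 1) / (x + ((m:ℝ) + 1) / 2)
      = (x + ((m:ℝ) + 1) / 2 - (m:ℝ)) / (x + ((m:ℝ) + 1) / 2) := by
    field_simp
    ring
  rw [heq, div_le_div_iff₀ hS (pow_pos hx1 m)]
  nlinarith [part1, pow_pos hx1 m, pow_pos hx m]
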